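/- arXiv:2403.04494 — 2 statements merged into one kernel-verified Lean document; each statement's English description precedes it below -/
import Mathlib

section
/- Hyperbolic law of cosines/sines for ideal quadrilaterals: Let x₀, x₁ be linearly independent positive light-like vectors in R³ and y a unit space-like vector with x₀∘y < 0 and x₁∘y < 0. Define v_i = (−1/(x_i∘y))·x_i + y for i = 0,1, and set cosh ℓ = −v₀∘v₁, e^{a_i} = −x_i∘y, e^d = −(1/2)·x₀∘x₁. Then sinh(ℓ/2) = e^{(d−a₀−a₁)/2}. -/
/-- The Lorentzian inner product on `ℝ³`. -/
def lprod (x y : Fin 3 → ℝ) : ℝ := -(x 0 * y 0) + x 1 * y 1 + x 2 * y 2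

lemma lprod_expand (a b : ℝ) (x₀ x₁ y : Fin 3 → ℝ) :
    lprod (a • x₀ + y) (b • x₁ + y) =
      a * b * lprod x₀ x₁ + a * lprod x₀ y + b * lprod x₁ y + lprod y y := by
  simp only [lprod, Pi.add_apply, Pi.smul_apply, smul_eq_mul]
  ring

/-- Law of cosines for a right-angled quadrilateral with two ideal vertices:
`sinh(ℓ/2) = e^{(d - a₀ - a₁)/2}`. -/
theorem ideal_quadrilateral_law {x₀ x₁ y : Fin 3 → ℝ}
    (hind : LinearIndependent ℝ ![x₀, x₁])
    (h₀ : lprod x₀ x₀ = 0) (h₀pos : 0 < x₀ 0)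
    (h₁ : lprod x₁ x₁ = 0) (h₁pos : 0 < x₁ 0)
    (hy : lprod y y = 1) (hy₀ : lprod x₀ y < 0) (hy₁ : lprod x₁ y < 0)
    (v₀ v₁ : Fin 3 → ℝ)
    (hv₀ : v₀ = (-1 / lprod x₀ y) • x₀ + y)
    (hv₁ : v₁ = (-1 / lprod x₁ y) • x₁ + y)
    (ℓ a₀ a₁ d : ℝ) (hℓ : 0 ≤ ℓ)
    (hcosh : Real.cosh ℓ = -lprod v₀ v₁)
    (ha₀ : Real.exp a₀ = -lprod x₀ y) (ha₁ : Real.exp a₁ = -lprod x₁ y)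
    (hd : Real.exp d = -(1 / 2) * lprod x₀ x₁) :
    Real.sinh (ℓ / 2) = Real.exp ((d - a₀ - a₁) / 2) := by
  have h0ne : lprod x₀ y ≠ 0 := ne_of_lt hy₀
  have h1ne : lprod x₁ y ≠ 0 := ne_of_lt hy₁
  have key : lprod v₀ v₁ = lprod x₀ x₁ / (lprod x₀ y * lprod x₁ y) - 1 := by
    rw [hv₀, hv₁, lprod_expand, hy]
    field_simp
    ring
  -- cosh ℓ - 1 = 2 * exp (d - a₀ - a₁)
  have hE : Real.cosh ℓ - 1 = 2 * Real.exp (d - a₀ - a₁) := by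
    have : Real.exp (d - a₀ - a₁) = Real.exp d / (Real.exp a₀ * Real.exp a₁) := by
      rw [← Real.exp_add, ← Real.exp_sub]; ring_nf
    rw [hcosh, key, this, hd, ha₀, ha₁]
    field_simp
    ring
  have hsq : Real.sinh (ℓ / 2) ^ 2 = Real.exp ((d - a₀ - a₁) / 2) ^ 2 := by
    have h2 : Real.cosh ℓ = 2 * Real.sinh (ℓ / 2) ^ 2 + 1 := by
      have := Real.cosh_two_mul (ℓ / 2)
      have hc := Real.cosh_sq (ℓ / 2)
      rw [show 2 * (ℓ / 2) = ℓ by ring] at this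
      rw [this, hc]; ring
    have he : Real.exp ((d - a₀ - a₁) / 2) ^ 2 = Real.exp (d - a₀ - a₁) := by
      rw [sq, ← Real.exp_add]; ring_nf
    rw [he]
    nlinarith [hE, h2]
  have hs : 0 ≤ Real.sinh (ℓ / 2) := Real.sinh_nonneg_iff.mpr (by linarith)
  nlinarith [Real.exp_pos ((d - a₀ - a₁) / 2), hsq, hs]
end

section
/- Pentagon law of sines: with the hypotheses of the pentagon setup (x positive light-like, y₀, y₁ unit space-like, x∘y_i < 0, y₀∘y₁ < −1), define u_i = (1/2)(1 + 1/(x∘y_i)²)·x + (−1/(x∘y_i))·y_i for i = 0,1, and let θ = √(−2(1 + u₀∘u₁)), sinh ℓ_i = √(cosh² ℓ_i − 1) with cosh ℓ_i as in the pentagon law of cosines, sinh d = √((y₀∘y₁)² − 1), e^{a_i} = −x∘y_i. Then θ/sinh d = sinh ℓ₀/e^{a₁} = sinh ℓ₁/e^{a₀}. -/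
/-- Law of sines for a convex pentagon with four right angles and one ideal
vertex: `θ/sinh d = sinh ℓ₀/e^{a₁} = sinh ℓ₁/e^{a₀}`. -/
theorem pentagon_law_of_sines {x y₀ y₁ : Fin 3 → ℝ}
    (hx : lprod x x = 0) (hxpos : 0 < x 0)
    (hy₀ : lprod y₀ y₀ = 1) (hy₁ : lprod y₁ y₁ = 1)
    (hxy₀ : lprod x y₀ < 0) (hxy₁ : lprod x y₁ < 0)
    (hyy : lprod y₀ y₁ < -1)
    (u₀ u₁ : Fin 3 → ℝ)
    (hu₀ : u₀ = ((1 + 1 / (lprod x y₀) ^ 2) / 2) • x + (-1 / lprod x y₀) • y₀)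
    (hu₁ : u₁ = ((1 + 1 / (lprod x y₁) ^ 2) / 2) • x + (-1 / lprod x y₁) • y₁)
    (θ a₀ a₁ d ℓ₀ ℓ₁ : ℝ)
    (hθ : θ = Real.sqrt (-2 * (1 + lprod u₀ u₁)))
    (ha₀ : Real.exp a₀ = -lprod x y₀) (ha₁ : Real.exp a₁ = -lprod x y₁)
    (hd : Real.cosh d = -lprod y₀ y₁) (hdpos : 0 ≤ d)
    (hℓ₀ : Real.cosh ℓ₀ = (Real.exp a₀ * Real.cosh d + Real.exp a₁) /
      (Real.exp a₀ * Real.sinh d)) (hℓ₀pos : 0 ≤ ℓ₀)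
    (hℓ₁ : Real.cosh ℓ₁ = (Real.exp a₁ * Real.cosh d + Real.exp a₀) /
      (Real.exp a₁ * Real.sinh d)) (hℓ₁pos : 0 ≤ ℓ₁) :
    θ / Real.sinh d = Real.sinh ℓ₀ / Real.exp a₁ ∧
    Real.sinh ℓ₀ / Real.exp a₁ = Real.sinh ℓ₁ / Real.exp a₀ := by
  set A := Real.exp a₀ with hAdef
  set B := Real.exp a₁ with hBdef
  have hA : 0 < A := Real.exp_pos _
  have hB : 0 < B := Real.exp_pos _
  have hxy0 : lprod x y₀ = -A := by linarith
  have hxy1 : lprod x y₁ = -B := by linarith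
  have hyy' : lprod y₀ y₁ = -Real.cosh d := by linarith
  have hc : 1 < Real.cosh d := by rw [hd]; linarith
  have hdpos' : 0 < d := by
    rcases lt_or_eq_of_le hdpos with h | h
    · exact h
    · exfalso; rw [← h, Real.cosh_zero] at hc; linarith
  have hsd : 0 < Real.sinh d := Real.sinh_pos_iff.mpr hdpos'
  have hsd2 : Real.sinh d ^ 2 = Real.cosh d ^ 2 - 1 := by
    have := Real.cosh_sq d; linarith
  obtain ⟨S, hSdef⟩ : ∃ S, S = A ^ 2 + B ^ 2 + 2 * A * B * Real.cosh d := ⟨_, rfl⟩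
  have hSpos : 0 < S := by
    rw [hSdef]
    nlinarith [mul_pos (mul_pos hA hB) (by linarith : (0:ℝ) < Real.cosh d), sq_nonneg A, sq_nonneg B]
  -- bilinear expansion
  have hbil : lprod u₀ u₁ =
      ((1 + 1 / (lprod x y₀) ^ 2) / 2) * ((1 + 1 / (lprod x y₁) ^ 2) / 2) * lprod x x
      + ((1 + 1 / (lprod x y₀) ^ 2) / 2) * (-1 / lprod x y₁) * lprod x y₁
      + ((1 + 1 / (lprod x y₁) ^ 2) / 2) * (-1 / lprod x y₀) * lprod x y₀
      + (-1 / lprod x y₀) * (-1 / lprod x y₁) * lprod y₀ y₁ := by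
    subst hu₀ hu₁
    simp only [lprod, Pi.add_apply, Pi.smul_apply, smul_eq_mul]
    ring
  have hL : -2 * (1 + lprod u₀ u₁) = S / (A * B) ^ 2 := by
    rw [hbil, hx, hxy0, hxy1, hyy', hSdef]
    field_simp
    ring
  have hθ' : θ = Real.sqrt S / (A * B) := by
    rw [hθ, hL, Real.sqrt_div hSpos.le, Real.sqrt_sq (by positivity)]
  have key : ∀ C D ℓ : ℝ, 0 < C → 0 ≤ ℓ →
      Real.cosh ℓ = (C * Real.cosh d + D) / (C * Real.sinh d) →
      C ^ 2 + D ^ 2 + 2 * C * D * Real.cosh d = S →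
      Real.sinh ℓ = Real.sqrt S / (C * Real.sinh d) := by
    intro C D ℓ hC hℓ hcosh hCDS
    have h1 : Real.sinh ℓ ^ 2 = S / (C * Real.sinh d) ^ 2 := by
      have h2 : Real.sinh ℓ ^ 2 = Real.cosh ℓ ^ 2 - 1 := by
        have := Real.cosh_sq ℓ; linarith
      have hCs : (C * Real.sinh d) ^ 2 ≠ 0 := by positivity
      rw [h2, hcosh, div_pow, div_sub_one hCs, ← hCDS]
      congr 1
      linear_combination (-C ^ 2) * hsd2
    have h3 : Real.sinh ℓ = Real.sqrt (Real.sinh ℓ ^ 2) :=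
      (Real.sqrt_sq (Real.sinh_nonneg_iff.mpr hℓ)).symm
    rw [h3, h1, Real.sqrt_div hSpos.le, Real.sqrt_sq (by positivity)]
  have h₀ : Real.sinh ℓ₀ = Real.sqrt S / (A * Real.sinh d) :=
    key A B ℓ₀ hA hℓ₀pos hℓ₀ (by rw [hSdef])
  have h₁ : Real.sinh ℓ₁ = Real.sqrt S / (B * Real.sinh d) :=
    key B A ℓ₁ hB hℓ₁pos hℓ₁ (by rw [hSdef]; ring)
  constructor
  · rw [hθ', h₀, div_div, div_div]
    congr 1
    ring
  · rw [h₀, h₁, div_div, div_div]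
    congr 1
    ring
end
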